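/- There exist constants C > 0 and C_0 > 0 such that for every integer n ≥ 1 and every even integer k with 4 C_0 √n ≤ k ≤ 2n, one has T̃_{2n}^{k} ≤ C (k²/n) exp(−C_0 k²/n) T_{2n}^{0}. -/

import Mathlib

open Finset

noncomputable section

/-- The height after `t` steps of the walk with up (`true`) / down (`false`) step sequence
`ε`; each trajectory `x ∈ 𝒯_{m,l}` is identified with its sequence of `±1` steps, and
`heightF ε t = x(t)`. -/
def heightF {L : ℕ} (ε : Fin L → Bool) (t : ℕ) : ℤ :=
  ∑ s ∈ Finset.range t, if h : s < L then (if ε ⟨s, h⟩ then 1 else -1) else 0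


open scoped Classical in
/-- `T_{2n}^k`: nonnegative walks of length `L` from `0` to `k`, identified with their step
sequences. -/
def endAtFinset (L k : ℕ) : Finset (Fin L → Bool) :=
  Finset.univ.filter (fun ε => heightF ε L = k ∧ ∀ t ≤ L, 0 ≤ heightF ε t)

open scoped Classical in
/-- `T̃_{2n}^k`: walks of length `L` from `0` to `k` confined to the strip `[0, k]`. -/
def stripFinset (L k : ℕ) : Finset (Fin L → Bool) :=
  Finset.univ.filter (fun ε =>
    heightF ε L = k ∧ ∀ t ≤ L, 0 ≤ heightF ε t ∧ heightF ε t ≤ k)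

/-!
Cut a strip walk at time `n`: the first half is a nonnegative walk, and so is the second half
read backwards from its endpoint `k = 2j`, because the walk never exceeds `k`. If the halves have
`a` and `b` up-steps then `a + b = n + j`. By the reflection principle (ballot theorem) there
are `C(n,u) (2u+1-n)/(u+1)` nonnegative walks of length `n` with `u` up-steps, at most
`2(k+1)/(n+2) · C(n,u)` when their end `2u - n` is at most `k`. Vandermonde's identity sums the
products `C(n,a) C(n,b)` to `C(2n, n+j)`, which decays like `C(2n,n) e^{-j²/(2n+1)}`, and
`C(2n,n) = (n+1) T_{2n}^0`.
-/

section Walk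

variable {L : ℕ} (ε : Fin L → Bool)

def stepF (s : ℕ) : ℤ :=
  if h : s < L then (if ε ⟨s, h⟩ then 1 else -1) else 0

theorem heightF_eq_sum_stepF (t : ℕ) : heightF ε t = ∑ s ∈ range t, stepF ε s := rfl

theorem heightF_zero : heightF ε 0 = 0 := rfl

theorem heightF_succ (t : ℕ) : heightF ε (t + 1) = heightF ε t + stepF ε t :=
  sum_range_succ _ _

theorem neg_one_le_stepF (s : ℕ) : -1 ≤ stepF ε s := by
  unfold stepF; split_ifs <;> omega

def numSteps (b : Bool) : ℕ := #{i | ε i = b}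

theorem numSteps_true_add_numSteps_false : numSteps ε true + numSteps ε false = L := by
  simpa [numSteps] using card_filter_add_card_filter_not (s := univ) (fun i => ε i = true)

theorem heightF_last : heightF ε L = numSteps ε true - numSteps ε false := by
  have hstep : ∀ i : Fin L,
      stepF ε i = (if ε i = true then 1 else 0) - (if ε i = false then 1 else 0) := by
    intro i; cases h : ε i <;> simp [stepF, h]
  simp only [heightF_eq_sum_stepF, ← Fin.sum_univ_eq_sum_range, hstep, sum_sub_distrib, numSteps,
    natCast_card_filter]

theorem heightF_last_eq_numSteps_true : heightF ε L = 2 * numSteps ε true - L := by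
  have := numSteps_true_add_numSteps_false ε
  rw [heightF_last]; omega

theorem heightF_last_eq_numSteps_false : heightF ε L = L - 2 * numSteps ε false := by
  have := numSteps_true_add_numSteps_false ε
  rw [heightF_last]; omega

end Walk

theorem card_numSteps_eq (L : ℕ) (b : Bool) (j : ℕ) :
    #{ε : Fin L → Bool | numSteps ε b = j} = L.choose j := by
  conv_rhs => rw [← card_fin L, ← card_powersetCard]
  refine card_bij' (fun ε _ => ({i | ε i = b} : Finset (Fin L)))
    (fun S _ i => if i ∈ S then b else !b)
    (fun ε hε => ?_) (fun S hS => ?_) (fun ε _ => ?_) (fun S _ => ?_)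
  · exact mem_powersetCard.2 ⟨subset_univ _, (mem_filter.1 hε).2⟩
  · refine mem_filter.2 ⟨mem_univ _, ?_⟩
    rw [← (mem_powersetCard.1 hS).2, numSteps]
    congr 1
    ext i; by_cases hi : i ∈ S <;> simp [hi]
  · funext i; cases b <;> cases h : ε i <;> simp [h]
  · ext i; by_cases hi : i ∈ S <;> simp [hi]

section Reflection

variable {L : ℕ}

def flipAfter (ε : Fin L → Bool) (τ : ℕ) : Fin L → Bool :=
  fun i => if (i : ℕ) < τ then ε i else !ε i

theorem flipAfter_flipAfter (ε : Fin L → Bool) (τ : ℕ) :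
    flipAfter (flipAfter ε τ) τ = ε := by
  funext i; by_cases h : (i : ℕ) < τ <;> simp [flipAfter, h]

theorem stepF_flipAfter (ε : Fin L → Bool) (τ s : ℕ) :
    stepF (flipAfter ε τ) s = if s < τ then stepF ε s else -stepF ε s := by
  unfold stepF flipAfter
  split_ifs <;> simp_all

theorem heightF_flipAfter_of_le (ε : Fin L → Bool) {τ t : ℕ} (h : t ≤ τ) :
    heightF (flipAfter ε τ) t = heightF ε t :=
  sum_congr rfl fun s hs => by
    rw [← stepF, stepF_flipAfter, if_pos ((mem_range.1 hs).trans_le h)]; rfl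

theorem heightF_flipAfter_of_ge (ε : Fin L → Bool) {τ t : ℕ} (h : τ ≤ t) :
    heightF (flipAfter ε τ) t = 2 * heightF ε τ - heightF ε t := by
  induction t, h using Nat.le_induction with
  | base => rw [heightF_flipAfter_of_le ε le_rfl]; ring
  | succ t hτt ih =>
    rw [heightF_succ, heightF_succ, ih, stepF_flipAfter, if_neg (by omega)]; ring

abbrev HitsNeg (ε : Fin L → Bool) : Prop := ∃ t ≤ L, heightF ε t < 0

open scoped Classical in
def hitTime (ε : Fin L → Bool) : ℕ := if h : HitsNeg ε then Nat.find h else 0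

theorem hitTime_eq {ε : Fin L → Bool} {τ : ℕ} (hτ : τ ≤ L) (hneg : heightF ε τ < 0)
    (hmin : ∀ t < τ, 0 ≤ heightF ε t) : hitTime ε = τ := by
  have h : HitsNeg ε := ⟨τ, hτ, hneg⟩
  rw [hitTime, dif_pos h, Nat.find_eq_iff]
  exact ⟨⟨hτ, hneg⟩, fun t ht ⟨_, hneg'⟩ => (hmin t ht).not_gt hneg'⟩

theorem hitTime_spec {ε : Fin L → Bool} (h : HitsNeg ε) :
    hitTime ε ≤ L ∧ heightF ε (hitTime ε) = -1 ∧
      ∀ t < hitTime ε, 0 ≤ heightF ε t := by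
  rw [hitTime, dif_pos h]
  obtain ⟨hτL, hneg⟩ := Nat.find_spec h
  have hmin : ∀ t < Nat.find h, 0 ≤ heightF ε t := fun t ht =>
    not_lt.1 fun hlt => Nat.find_min h ht ⟨(ht.trans_le hτL).le, hlt⟩
  refine ⟨hτL, ?_, hmin⟩
  obtain ⟨s, hs⟩ : ∃ s, Nat.find h = s + 1 := Nat.exists_eq_succ_of_ne_zero fun h0 => by
    rw [h0, heightF_zero] at hneg; exact hneg.false
  rw [hs, heightF_succ] at hneg ⊢
  have := hmin s (by omega)
  have := neg_one_le_stepF ε s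
  omega

def reflect (ε : Fin L → Bool) : Fin L → Bool := flipAfter ε (hitTime ε)

variable {ε : Fin L → Bool} (h : HitsNeg ε)
include h

theorem hitTime_reflect : hitTime (reflect ε) = hitTime ε := by
  obtain ⟨hτL, hτ, hmin⟩ := hitTime_spec h
  refine hitTime_eq hτL ?_ fun t ht => ?_
  · rw [reflect, heightF_flipAfter_of_le ε le_rfl, hτ]; norm_num
  · rw [reflect, heightF_flipAfter_of_le ε ht.le]; exact hmin t ht

theorem hitsNeg_reflect : HitsNeg (reflect ε) := by
  obtain ⟨hτL, hτ, -⟩ := hitTime_spec h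
  exact ⟨hitTime ε, hτL, by rw [reflect, heightF_flipAfter_of_le ε le_rfl, hτ]; norm_num⟩

theorem reflect_reflect : reflect (reflect ε) = ε := by
  rw [reflect, hitTime_reflect h, reflect, flipAfter_flipAfter]

theorem heightF_reflect_last : heightF (reflect ε) L = -2 - heightF ε L := by
  obtain ⟨hτL, hτ, -⟩ := hitTime_spec h
  rw [reflect, heightF_flipAfter_of_ge ε hτL, hτ]; ring

end Reflection

section Ballot

open scoped Classical in
def nonnegWalks (L u : ℕ) : Finset (Fin L → Bool) :=
  {ε | numSteps ε true = u ∧ ∀ t ≤ L, 0 ≤ heightF ε t}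

open scoped Classical in
/-- Reflecting a walk after its first visit to `-1` turns its end height `h` into `-2 - h`, that is,
`u` up-steps into `u + 1` down-steps. -/
theorem card_numSteps_true_hitsNeg {L u : ℕ} (hu : L ≤ 2 * u) :
    #{ε : Fin L → Bool | numSteps ε true = u ∧ HitsNeg ε} = L.choose (u + 1) := by
  rw [← card_numSteps_eq L false (u + 1)]
  have hits : ∀ ε : Fin L → Bool, numSteps ε false = u + 1 → HitsNeg ε := fun ε hε =>
    ⟨L, le_rfl, by rw [heightF_last_eq_numSteps_false]; omega⟩
  refine card_bij' (fun ε _ => reflect ε) (fun ε _ => reflect ε)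
    (fun ε hε => ?_) (fun ε hε => ?_) (fun ε hε => ?_) (fun ε hε => ?_)
  · simp only [mem_filter, mem_univ, true_and] at hε ⊢
    have := heightF_reflect_last hε.2
    rw [heightF_last_eq_numSteps_false (reflect ε), heightF_last_eq_numSteps_true ε] at this
    omega
  · simp only [mem_filter, mem_univ, true_and] at hε ⊢
    have hneg := hits ε hε
    refine ⟨?_, hitsNeg_reflect hneg⟩
    have := heightF_reflect_last hneg
    rw [heightF_last_eq_numSteps_true (reflect ε), heightF_last_eq_numSteps_false ε] at this
    omega
  · exact reflect_reflect (mem_filter.1 hε).2.2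
  · exact reflect_reflect (hits ε (mem_filter.1 hε).2)

theorem card_nonnegWalks_add_choose {L u : ℕ} (hu : L ≤ 2 * u) :
    #(nonnegWalks L u) + L.choose (u + 1) = L.choose u := by
  classical
  rw [← card_numSteps_true_hitsNeg hu, ← card_numSteps_eq L true u,
    ← card_filter_add_card_filter_not (s := {ε | numSteps ε true = u})
      (fun ε => ∀ t ≤ L, 0 ≤ heightF ε t)]
  congr 2 <;> ext ε <;> simp [nonnegWalks, HitsNeg]

theorem card_nonnegWalks_mul {L u : ℕ} (hu : L ≤ 2 * u) :
    #(nonnegWalks L u) * (u + 1) = L.choose u * (2 * u + 1 - L) := by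
  have hsplit := card_nonnegWalks_add_choose hu
  rcases le_or_gt u L with huL | hLu
  · rw [show 2 * u + 1 - L = (u + 1) - (L - u) by omega, Nat.mul_sub,
      ← Nat.choose_succ_right_eq, ← hsplit, add_mul, Nat.add_sub_cancel]
  · rw [Nat.choose_eq_zero_of_lt hLu] at hsplit ⊢
    simp_all

theorem nonnegWalks_eq_empty {L u : ℕ} (hu : 2 * u < L) : nonnegWalks L u = ∅ :=
  eq_empty_of_forall_notMem fun ε hε => by
    simp only [nonnegWalks, mem_filter, mem_univ, true_and] at hε
    have := hε.2 L le_rfl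
    rw [heightF_last_eq_numSteps_true] at this
    omega

theorem card_nonnegWalks_mul_le {L u j : ℕ} (hu : L ≤ 2 * u) (h : 2 * u ≤ L + 2 * j) :
    #(nonnegWalks L u) * (L + 2) ≤ 2 * (2 * j + 1) * L.choose u :=
  calc #(nonnegWalks L u) * (L + 2) ≤ #(nonnegWalks L u) * (2 * (u + 1)) := by gcongr; omega
    _ = 2 * (L.choose u * (2 * u + 1 - L)) := by rw [← card_nonnegWalks_mul hu]; ring
    _ ≤ 2 * (L.choose u * (2 * j + 1)) := by gcongr; omega
    _ = 2 * (2 * j + 1) * L.choose u := by ring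

theorem card_nonnegWalks_mul_card_nonnegWalks_le {n j a b : ℕ} (hab : a + b = n + j) :
    #(nonnegWalks n a) * #(nonnegWalks n b) * (n + 2) ^ 2 ≤
      (2 * (2 * j + 1)) ^ 2 * (n.choose a * n.choose b) := by
  rcases lt_or_ge (2 * a) n with ha | ha
  · simp [nonnegWalks_eq_empty ha]
  rcases lt_or_ge (2 * b) n with hb | hb
  · simp [nonnegWalks_eq_empty hb]
  calc #(nonnegWalks n a) * #(nonnegWalks n b) * (n + 2) ^ 2
      = (#(nonnegWalks n a) * (n + 2)) * (#(nonnegWalks n b) * (n + 2)) := by ring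
    _ ≤ (2 * (2 * j + 1) * n.choose a) * (2 * (2 * j + 1) * n.choose b) :=
      Nat.mul_le_mul (card_nonnegWalks_mul_le ha (by omega))
        (card_nonnegWalks_mul_le hb (by omega))
    _ = (2 * (2 * j + 1)) ^ 2 * (n.choose a * n.choose b) := by ring

end Ballot

theorem card_endAtFinset_two_mul_zero (n : ℕ) : #(endAtFinset (2 * n) 0) = catalan n := by
  have hset : endAtFinset (2 * n) 0 = nonnegWalks (2 * n) n := by
    ext ε
    simp only [endAtFinset, nonnegWalks, mem_filter, mem_univ, true_and]
    rw [heightF_last_eq_numSteps_true]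
    constructor <;> rintro ⟨hend, hnonneg⟩ <;> exact ⟨by omega, hnonneg⟩
  have h := card_nonnegWalks_mul (L := 2 * n) (u := n) (by omega)
  rw [show 2 * n + 1 - 2 * n = 1 by omega, mul_one, ← Nat.centralBinom_eq_two_mul_choose,
    ← succ_mul_catalan_eq_centralBinom, ← hset, mul_comm] at h
  exact Nat.eq_of_mul_eq_mul_left n.succ_pos h

section Split

variable {n : ℕ}

def firstHalf (ε : Fin (2 * n) → Bool) : Fin n → Bool :=
  fun s => ε ⟨s, by omega⟩

def reversedSecondHalf (ε : Fin (2 * n) → Bool) : Fin n → Bool :=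
  fun s => ε ⟨2 * n - 1 - s, by omega⟩

theorem heightF_firstHalf (ε : Fin (2 * n) → Bool) {t : ℕ} (ht : t ≤ n) :
    heightF (firstHalf ε) t = heightF ε t := by
  refine sum_congr rfl fun s hs => ?_
  have hs : s < n := (mem_range.1 hs).trans_le ht
  simp only [hs, dif_pos, show s < 2 * n by omega]
  rfl

theorem heightF_reversedSecondHalf (ε : Fin (2 * n) → Bool) {t : ℕ} (ht : t ≤ n) :
    heightF (reversedSecondHalf ε) t = heightF ε (2 * n) - heightF ε (2 * n - t) := by
  rw [heightF_eq_sum_stepF, heightF_eq_sum_stepF, heightF_eq_sum_stepF,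
    ← sum_Ico_eq_sub _ (by omega : 2 * n - t ≤ 2 * n), sum_Ico_eq_sum_range,
    show 2 * n - (2 * n - t) = t by omega, ← sum_range_reflect]
  refine sum_congr rfl fun s hs => ?_
  have hs : s < t := mem_range.1 hs
  simp only [stepF, reversedSecondHalf, dif_pos (show t - 1 - s < n by omega),
    dif_pos (show 2 * n - t + s < 2 * n by omega)]
  congr 3
  ext
  simp only
  omega

theorem firstHalf_reversedSecondHalf_injective :
    Function.Injective fun ε : Fin (2 * n) → Bool => (firstHalf ε, reversedSecondHalf ε) := by
  intro ε ε' h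
  simp only [Prod.mk.injEq] at h
  funext i
  by_cases hi : (i : ℕ) < n
  · simpa [firstHalf] using congrFun h.1 ⟨i, hi⟩
  · have := congrFun h.2 ⟨2 * n - 1 - i, by omega⟩
    simp only [reversedSecondHalf] at this
    convert this using 2 <;> ext <;> simp only <;> omega

end Split

theorem card_stripFinset_le_sum (n j : ℕ) :
    #(stripFinset (2 * n) (2 * j)) ≤
      ∑ p ∈ antidiagonal (n + j), #(nonnegWalks n p.1) * #(nonnegWalks n p.2) := by
  classical
  simp only [← card_product]
  refine (card_le_card_of_injOn (fun ε => (firstHalf ε, reversedSecondHalf ε))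
    (t := (antidiagonal (n + j)).biUnion fun p => nonnegWalks n p.1 ×ˢ nonnegWalks n p.2)
    (fun ε hε => ?_) firstHalf_reversedSecondHalf_injective.injOn).trans card_biUnion_le
  rw [mem_coe, stripFinset, mem_filter] at hε
  obtain ⟨-, hend, hstrip⟩ := hε
  push_cast at hend hstrip
  simp only [coe_biUnion, mem_coe, HasAntidiagonal.mem_antidiagonal, Set.mem_iUnion, exists_prop,
    mem_product, nonnegWalks, mem_filter, mem_univ, true_and, Prod.exists]
  refine ⟨_, _, ?_, ⟨rfl, fun t ht => ?_⟩, ⟨rfl, fun t ht => ?_⟩⟩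
  · have h1 := heightF_firstHalf ε (le_refl n)
    have h2 := heightF_reversedSecondHalf ε (le_refl n)
    rw [heightF_last_eq_numSteps_true] at h1 h2
    rw [show 2 * n - n = n by omega] at h2
    omega
  · rw [heightF_firstHalf ε ht]; exact (hstrip t (by omega)).1
  · rw [heightF_reversedSecondHalf ε ht, hend]; have := (hstrip (2 * n - t) (by omega)).2; omega

theorem card_stripFinset_mul_le (n j : ℕ) :
    #(stripFinset (2 * n) (2 * j)) * (n + 2) ^ 2 ≤
      (2 * (2 * j + 1)) ^ 2 * (2 * n).choose (n + j) :=
  calc #(stripFinset (2 * n) (2 * j)) * (n + 2) ^ 2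
      ≤ (∑ p ∈ antidiagonal (n + j), #(nonnegWalks n p.1) * #(nonnegWalks n p.2)) *
          (n + 2) ^ 2 :=
        Nat.mul_le_mul_right _ (card_stripFinset_le_sum n j)
    _ = ∑ p ∈ antidiagonal (n + j), #(nonnegWalks n p.1) * #(nonnegWalks n p.2) * (n + 2) ^ 2 :=
        sum_mul _ _ _
    _ ≤ ∑ p ∈ antidiagonal (n + j), (2 * (2 * j + 1)) ^ 2 * (n.choose p.1 * n.choose p.2) :=
        sum_le_sum fun p hp => card_nonnegWalks_mul_card_nonnegWalks_le (mem_antidiagonal.1 hp)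
    _ = (2 * (2 * j + 1)) ^ 2 * (2 * n).choose (n + j) := by
      rw [← mul_sum, ← Nat.add_choose_eq, ← two_mul]

theorem choose_succ_le_choose_mul_exp {N m : ℕ} (hm : N ≤ 2 * m) :
    (N.choose (m + 1) : ℝ) ≤ N.choose m * Real.exp (-((2 * m + 1 - N) / (N + 1))) := by
  rcases le_or_gt N m with hNm | hmN
  · rw [Nat.choose_eq_zero_of_lt (by omega), Nat.cast_zero]; positivity
  set x : ℝ := (2 * m + 1 - N) / (N + 1)
  have hratio : (N.choose (m + 1) : ℝ) * (m + 1) = N.choose m * (N - m) := by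
    rw [← Nat.cast_sub hmN.le]
    exact_mod_cast Nat.choose_succ_right_eq N m
  have hx : (N - m : ℝ) ≤ (1 - x) * (m + 1) := by
    have hmN' : (m : ℝ) + 1 ≤ N + 1 := by
      have : (m : ℝ) < N := by exact_mod_cast hmN
      linarith
    have hpos : (0 : ℝ) ≤ 2 * m + 1 - N := by
      have : (N : ℝ) ≤ 2 * m := by exact_mod_cast hm
      linarith
    have : x * (m + 1) ≤ 2 * m + 1 - N := by
      rw [div_mul_eq_mul_div, div_le_iff₀ (by positivity)]
      exact mul_le_mul_of_nonneg_left hmN' hpos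
    linarith
  calc (N.choose (m + 1) : ℝ) = N.choose m * (N - m) / (m + 1) := by
        rw [← hratio]; field_simp
    _ ≤ N.choose m * ((1 - x) * (m + 1)) / (m + 1) := by gcongr
    _ = N.choose m * (-x + 1) := by field_simp; ring
    _ ≤ N.choose m * Real.exp (-x) := by gcongr; exact Real.add_one_le_exp _

theorem choose_add_le_centralBinom_mul_exp (n j : ℕ) :
    ((2 * n).choose (n + j) : ℝ) ≤ n.centralBinom * Real.exp (-(j ^ 2 / (2 * n + 1))) := by
  induction j with
  | zero => simp [Nat.centralBinom_eq_two_mul_choose]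
  | succ j ih =>
    calc ((2 * n).choose (n + (j + 1)) : ℝ)
        ≤ (2 * n).choose (n + j) *
            Real.exp (-((2 * (n + j : ℕ) + 1 - (2 * n : ℕ)) / ((2 * n : ℕ) + 1))) :=
          choose_succ_le_choose_mul_exp (N := 2 * n) (m := n + j) (by omega)
      _ ≤ n.centralBinom * Real.exp (-(j ^ 2 / (2 * n + 1))) *
            Real.exp (-((2 * (n + j : ℕ) + 1 - (2 * n : ℕ)) / ((2 * n : ℕ) + 1))) := by gcongr
      _ = n.centralBinom * Real.exp (-((j + 1 : ℕ) ^ 2 / (2 * n + 1))) := by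
          rw [mul_assoc, ← Real.exp_add]
          push_cast
          ring_nf

theorem card_stripFinset_le_mul_catalan {n j : ℕ} (hn : 0 < n) (hj : 0 < j) :
    (#(stripFinset (2 * n) (2 * j)) : ℝ) ≤
      36 * j ^ 2 / n * Real.exp (-(j ^ 2 / (2 * n + 1))) * catalan n := by
  have hn' : (1 : ℝ) ≤ n := by exact_mod_cast hn
  have hj' : (1 : ℝ) ≤ j := by exact_mod_cast hj
  have hstrip : (#(stripFinset (2 * n) (2 * j)) : ℝ) ≤
      (2 * (2 * j + 1)) ^ 2 * (2 * n).choose (n + j) / (n + 2) ^ 2 := by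
    rw [le_div_iff₀ (by positivity)]
    exact_mod_cast card_stripFinset_mul_le n j
  have hcatalan : (n.centralBinom : ℝ) = (n + 1) * catalan n := by
    exact_mod_cast (succ_mul_catalan_eq_centralBinom n).symm
  have hsquare : ((2 * (2 * j + 1)) ^ 2 : ℝ) ≤ 36 * j ^ 2 := by nlinarith
  have hfrac : ((n : ℝ) + 1) / (n + 2) ^ 2 ≤ 1 / n := by
    rw [div_le_div_iff₀ (by positivity) (by positivity)]; nlinarith
  calc (#(stripFinset (2 * n) (2 * j)) : ℝ)
      ≤ (2 * (2 * j + 1)) ^ 2 * (n.centralBinom * Real.exp (-(j ^ 2 / (2 * n + 1)))) /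
          (n + 2) ^ 2 := by
        refine hstrip.trans ?_
        gcongr
        exact choose_add_le_centralBinom_mul_exp n j
    _ = (2 * (2 * j + 1)) ^ 2 * ((n + 1) / (n + 2) ^ 2) * Real.exp (-(j ^ 2 / (2 * n + 1))) *
          catalan n := by
        rw [hcatalan]; ring
    _ ≤ 36 * j ^ 2 * (1 / n) * Real.exp (-(j ^ 2 / (2 * n + 1))) * catalan n := by gcongr
    _ = 36 * j ^ 2 / n * Real.exp (-(j ^ 2 / (2 * n + 1))) * catalan n := by ring

/-- There are constants `C, C₀ > 0` such that for `n ≥ 1` and even `k` with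
`4 C₀ √n ≤ k ≤ 2n`, one has `T̃_{2n}^k ≤ C (k²/n) exp(-C₀ k²/n) T_{2n}^0`. -/
theorem strip_path_count_le :
    ∃ C C0 : ℝ, 0 < C ∧ 0 < C0 ∧ ∀ (n : ℕ), 1 ≤ n → ∀ k : ℕ, Even k →
      4 * C0 * Real.sqrt n ≤ (k : ℝ) → k ≤ 2 * n →
      ((stripFinset (2 * n) k).card : ℝ) ≤
        C * ((k : ℝ) ^ 2 / n) * Real.exp (-(C0 * (k : ℝ) ^ 2 / n)) *
          (endAtFinset (2 * n) 0).card := by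
  refine ⟨9, 1 / 12, by norm_num, by norm_num, ?_⟩
  rintro n hn k ⟨j, rfl⟩ hk -
  have hn' : (1 : ℝ) ≤ n := by exact_mod_cast hn
  have hj : 0 < j := by
    have : 0 < Real.sqrt n := Real.sqrt_pos.2 (by linarith)
    exact_mod_cast (show (0 : ℝ) < j by push_cast at hk; linarith)
  have hexp : Real.exp (-(j ^ 2 / (2 * n + 1))) ≤
      Real.exp (-(1 / 12 * ((2 * j : ℕ) : ℝ) ^ 2 / n)) := by
    rw [Real.exp_le_exp, neg_le_neg_iff, div_le_div_iff₀ (by positivity) (by positivity)]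
    push_cast
    nlinarith [sq_nonneg (j : ℝ)]
  rw [← two_mul, card_endAtFinset_two_mul_zero]
  calc (#(stripFinset (2 * n) (2 * j)) : ℝ)
      ≤ 36 * j ^ 2 / n * Real.exp (-(j ^ 2 / (2 * n + 1))) * catalan n :=
        card_stripFinset_le_mul_catalan hn hj
    _ ≤ 36 * j ^ 2 / n * Real.exp (-(1 / 12 * ((2 * j : ℕ) : ℝ) ^ 2 / n)) * catalan n := by
        gcongr
    _ = 9 * (((2 * j : ℕ) : ℝ) ^ 2 / n) * Real.exp (-(1 / 12 * ((2 * j : ℕ) : ℝ) ^ 2 / n)) *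
          catalan n := by
        push_cast; ring

end
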